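/- For every nonempty finite multiset M of binary strings of length n, if for every string s the set M(s) of members of M containing s as a substring satisfies |M(s)| > (4/5)|M| or |M(s)| < (1/5)|M|, then |M| = 1. Equivalently (Skiena–Sundaram): if |M| ≥ 2 then there exists a string s with (1/5)|M| ≤ |M(s)| ≤ (4/5)|M|. -/
import Mathlib

lemma ext_infix (s t : List Bool) (h : s <:+: t) (hl : s.length < t.length) :
    ∃ b, (s ++ [b]) <:+: t ∨ (b :: s) <:+: t := by
  obtain ⟨u, v, huv⟩ := h
  cases v with
  | cons b v' =>
      refine ⟨b, Or.inl ⟨u, v', ?_⟩⟩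
      simpa using huv
  | nil =>
      rcases u.eq_nil_or_concat with rfl | ⟨u', a, rfl⟩
      · simp only [List.nil_append, List.append_nil] at huv
        subst huv; omega
      · refine ⟨a, Or.inr ⟨u', [], ?_⟩⟩
        simpa using huv

/-- Skiena–Sundaram: for a nonempty finite set `M` of binary strings of length `n`,
if for every string `s` the set `M(s)` of members of `M` containing `s` as a substring
satisfies `|M(s)| > (4/5)|M|` or `|M(s)| < (1/5)|M|`, then `|M| = 1`.
(Equivalently, if `|M| ≥ 2` there is `s` with `(1/5)|M| ≤ |M(s)| ≤ (4/5)|M|`.) -/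
theorem stmt4 (n : ℕ) (M : Finset (List Bool)) (hne : M.Nonempty)
    (hlen : ∀ l ∈ M, l.length = n)
    (h : ∀ s : List Bool,
      5 * (M.filter (fun t => s <:+: t)).card > 4 * M.card ∨
      5 * (M.filter (fun t => s <:+: t)).card < M.card) :
    M.card = 1 := by
  have hM1 : 1 ≤ M.card := hne.card_pos
  have key : ∀ k, k ≤ n → ∃ s : List Bool, s.length = k ∧
      5 * (M.filter (fun t => s <:+: t)).card > 4 * M.card := by
    intro k
    induction k with
    | zero =>
        intro _
        refine ⟨[], rfl, ?_⟩
        have heq : M.filter (fun t => ([] : List Bool) <:+: t) = M := by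
          apply Finset.filter_true_of_mem
          intro t _
          exact List.nil_infix
        rw [heq]; omega
    | succ k ih =>
        intro hk
        obtain ⟨s, hsl, hs⟩ := ih (by omega)
        by_contra hc
        push_neg at hc
        have small : ∀ s' : List Bool, s'.length = k + 1 →
            5 * (M.filter (fun t => s' <:+: t)).card < M.card := by
          intro s' hs'
          rcases h s' with h1 | h1
          · exact absurd h1 (not_lt.mpr (hc s' hs'))
          · exact h1
        set A := M.filter (fun t => (s ++ [false]) <:+: t) with hA
        set B := M.filter (fun t => (s ++ [true]) <:+: t) with hB
        set C := M.filter (fun t => (false :: s) <:+: t) with hC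
        set D := M.filter (fun t => (true :: s) <:+: t) with hD
        have hsub : M.filter (fun t => s <:+: t) ⊆ (A ∪ B) ∪ (C ∪ D) := by
          intro t ht
          rw [Finset.mem_filter] at ht
          obtain ⟨htM, hinf⟩ := ht
          have hlt : s.length < t.length := by
            rw [hlen t htM, hsl]; omega
          obtain ⟨b, hb | hb⟩ := ext_infix s t hinf hlt
          · cases b <;>
              simp [hA, hB, Finset.mem_union, Finset.mem_filter, htM, hb]
          · cases b <;>
              simp [hC, hD, Finset.mem_union, Finset.mem_filter, htM, hb]
        have hcard := Finset.card_le_card hsub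
        have hu1 : ((A ∪ B) ∪ (C ∪ D)).card ≤ (A ∪ B).card + (C ∪ D).card :=
          Finset.card_union_le _ _
        have hu2 : (A ∪ B).card ≤ A.card + B.card := Finset.card_union_le _ _
        have hu3 : (C ∪ D).card ≤ C.card + D.card := Finset.card_union_le _ _
        have hAs : 5 * A.card < M.card := small _ (by simp [hsl])
        have hBs : 5 * B.card < M.card := small _ (by simp [hsl])
        have hCs : 5 * C.card < M.card := small _ (by simp [hsl])
        have hDs : 5 * D.card < M.card := small _ (by simp [hsl])
        omega
  obtain ⟨s, hsl, hs⟩ := key n le_rfl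
  have hone : (M.filter (fun t => s <:+: t)).card ≤ 1 := by
    apply Finset.card_le_one.mpr
    intro a ha b hb
    rw [Finset.mem_filter] at ha hb
    have ha' : s = a := ha.2.eq_of_length (by rw [hsl, hlen a ha.1])
    have hb' : s = b := hb.2.eq_of_length (by rw [hsl, hlen b hb.1])
    rw [← ha', ← hb']
  omega
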